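/- arXiv:2508.20872 — 5 statements merged into one kernel-verified Lean document; each statement's English description precedes it below -/
import Mathlib

section
/- Let (a_k), (b_k) be nonnegative real sequences with a_k ≤ a < 1 for all k and ∑ b_k < ∞, and let (C_k) be a real sequence satisfying C_{k+1} ≤ a_k C_k + b_k for all k ≥ 0. Then the series ∑_{k≥1} max(C_k, 0) converges. -/
open Finset

/-- Summing the recursion gives `S ≤ A (D 0 + S) + ∑ b` for the partial sums `S` of `D (k + 1)`;
since `A < 1` this bounds `S` uniformly. -/
theorem summable_of_succ_le_mul_add {D b : ℕ → ℝ} {A : ℝ} (hD : ∀ k, 0 ≤ D k) (hA : A < 1)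
    (hb0 : ∀ k, 0 ≤ b k) (hb : Summable b) (hrec : ∀ k, D (k + 1) ≤ A * D k + b k) :
    Summable D := by
  wlog hA0 : 0 ≤ A generalizing A
  · exact this zero_lt_one (fun k => by nlinarith [hrec k, hD k]) le_rfl
  have hpartial : ∀ n, ∑ k ∈ range n, D k ≤ D 0 + ∑ k ∈ range n, D (k + 1) := fun n => by
    have := sum_range_succ' D n
    have := sum_range_succ D n
    linarith [hD n]
  refine (summable_nat_add_iff 1).mp <| summable_of_sum_range_le
    (c := (A * D 0 + ∑' k, b k) / (1 - A)) (fun n => hD (n + 1)) fun n => ?_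
  have hsum : ∑ k ∈ range n, D (k + 1) ≤ A * (D 0 + ∑ k ∈ range n, D (k + 1)) + ∑' k, b k :=
    calc ∑ k ∈ range n, D (k + 1)
        ≤ ∑ k ∈ range n, (A * D k + b k) := sum_le_sum fun k _ => hrec k
      _ = A * ∑ k ∈ range n, D k + ∑ k ∈ range n, b k := by rw [sum_add_distrib, mul_sum]
      _ ≤ A * (D 0 + ∑ k ∈ range n, D (k + 1)) + ∑' k, b k := by
          gcongr
          · exact hpartial n
          · exact hb.sum_le_tsum _ fun i _ => hb0 i
  rw [le_div_iff₀ (sub_pos.2 hA)]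
  linarith

theorem max_succ_zero_le {a b C : ℕ → ℝ} {A : ℝ} (ha0 : ∀ k, 0 ≤ a k) (haA : ∀ k, a k ≤ A)
    (hb0 : ∀ k, 0 ≤ b k) (hC : ∀ k, C (k + 1) ≤ a k * C k + b k) (k : ℕ) :
    max (C (k + 1)) 0 ≤ A * max (C k) 0 + b k := by
  have hCk : a k * C k ≤ a k * max (C k) 0 :=
    mul_le_mul_of_nonneg_left (le_max_left _ _) (ha0 k)
  have hAk : a k * max (C k) 0 ≤ A * max (C k) 0 :=
    mul_le_mul_of_nonneg_right (haA k) (le_max_right _ _)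
  have hA0 : 0 ≤ A := (ha0 k).trans (haA k)
  exact max_le (by linarith [hC k]) (add_nonneg (mul_nonneg hA0 (le_max_right _ _)) (hb0 k))

/-- Lemma 6, part 1: if a_k ≤ a < 1, b summable nonnegative, and C_{k+1} ≤ a_k C_k + b_k,
then ∑_{k≥1} [C_k]₊ converges. -/
theorem stmt_2 (a b C : ℕ → ℝ) (A : ℝ)
    (ha0 : ∀ k, 0 ≤ a k) (haA : ∀ k, a k ≤ A) (hA : A < 1)
    (hb0 : ∀ k, 0 ≤ b k) (hb : Summable b)
    (hC : ∀ k, C (k + 1) ≤ a k * C k + b k) :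
    Summable (fun k => max (C (k + 1)) 0) :=
  (summable_nat_add_iff 1).mpr <| summable_of_succ_le_mul_add (fun _ => le_max_right _ _) hA hb0 hb
    (max_succ_zero_le ha0 haA hb0 hC)
end

section
/- Let (a_k), (b_k) be nonnegative sequences with a_k ≤ a < 1 and ∑ b_k < ∞, let (C_k) satisfy C_{k+1} ≤ a_k C_k + b_k, and suppose C_k ≥ w_k − d·w_{k−1} for all k ≥ 1 where d ∈ [0,1) and (w_k) is a nonnegative sequence. Then ∑_{k≥0} w_k < ∞ (and in particular w_k → 0). -/
/-! Both `max C 0` and `w` satisfy a perturbed contraction `u (k + 1) ≤ r * u k + v k` with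
`r < 1` (wlog `0 ≤ r`) and nonnegative `u`. Summing it up to `n` gives
`S (n + 1) ≤ u 0 + r * S (n + 1) + ∑_{i<n} v i` for the partial sums `S` of `u`, so these are
bounded as soon as those of `v` are bounded above. -/

open Finset

theorem summable_of_le_mul_add_of_bddAbove {u v : ℕ → ℝ} {r : ℝ} (hu : ∀ k, 0 ≤ u k)
    (hr : r < 1) (hv : BddAbove (Set.range fun n => ∑ i ∈ range n, v i))
    (huv : ∀ k, u (k + 1) ≤ r * u k + v k) : Summable u := by
  obtain ⟨c, hc⟩ := hv
  have hvc : ∀ n, ∑ i ∈ range n, v i ≤ c := fun n => hc ⟨n, rfl⟩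
  set s := max r 0
  have hs0 : 0 ≤ s := le_max_right r 0
  have hs1 : 0 < 1 - s := sub_pos.2 (max_lt hr one_pos)
  have hus : ∀ k, u (k + 1) ≤ s * u k + v k := fun k =>
    (huv k).trans (by gcongr; exacts [hu k, le_max_left r 0])
  have hmono : ∀ n, ∑ i ∈ range n, u i ≤ ∑ i ∈ range (n + 1), u i := fun n => by
    rw [sum_range_succ]; linarith [hu n]
  refine summable_of_sum_range_le (c := (u 0 + c) / (1 - s)) hu fun n => (hmono n).trans ?_
  have hshift : ∑ i ∈ range n, u (i + 1) ≤ s * ∑ i ∈ range n, u i + ∑ i ∈ range n, v i := by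
    rw [mul_sum, ← sum_add_distrib]
    exact sum_le_sum fun k _ => hus k
  have key : ∑ i ∈ range (n + 1), u i ≤ u 0 + s * ∑ i ∈ range (n + 1), u i + c :=
    calc ∑ i ∈ range (n + 1), u i = u 0 + ∑ i ∈ range n, u (i + 1) := by
          rw [sum_range_succ']; ring
      _ ≤ u 0 + (s * ∑ i ∈ range n, u i + ∑ i ∈ range n, v i) := by gcongr
      _ ≤ u 0 + s * ∑ i ∈ range (n + 1), u i + c := by
          have := mul_le_mul_of_nonneg_left (hmono n) hs0
          linarith [hvc n]
  rw [le_div_iff₀ hs1]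
  linarith

theorem Summable.bddAbove_range_sum_range {v : ℕ → ℝ} (hv : Summable v) :
    BddAbove (Set.range fun n => ∑ i ∈ range n, v i) :=
  hv.hasSum.tendsto_sum_nat.bddAbove_range

theorem max_zero_le_mul_max_zero_add {a A b x y : ℝ} (ha0 : 0 ≤ a) (haA : a ≤ A) (hb0 : 0 ≤ b)
    (h : x ≤ a * y + b) : max x 0 ≤ A * max y 0 + b := by
  have hy : a * y ≤ A * max y 0 :=
    (mul_le_mul_of_nonneg_left (le_max_left y 0) ha0).trans
      (mul_le_mul_of_nonneg_right haA (le_max_right y 0))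
  have hA0 : 0 ≤ A * max y 0 := mul_nonneg (ha0.trans haA) (le_max_right y 0)
  exact max_le (by linarith) (by linarith)

theorem stmt_4_general (a b C w : ℕ → ℝ) (A d : ℝ)
    (ha0 : ∀ k, 0 ≤ a k) (haA : ∀ k, a k ≤ A) (hA : A < 1)
    (hb0 : ∀ k, 0 ≤ b k) (hb : Summable b)
    (hC : ∀ k, C (k + 1) ≤ a k * C k + b k)
    (hd1 : d < 1)
    (hw0 : ∀ k, 0 ≤ w k)
    (hCw : ∀ k ≥ 1, w k - d * w (k - 1) ≤ C k) :
    Summable w ∧ Filter.Tendsto w Filter.atTop (nhds 0) := by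
  set g : ℕ → ℝ := fun k => max (C k) 0
  have hg : Summable g :=
    summable_of_le_mul_add_of_bddAbove (fun k => le_max_right _ _) hA
      hb.bddAbove_range_sum_range fun k => max_zero_le_mul_max_zero_add (ha0 k) (haA k) (hb0 k) (hC k)
  have hw : Summable w := by
    refine summable_of_le_mul_add_of_bddAbove hw0 hd1
      ((summable_nat_add_iff 1).2 hg).bddAbove_range_sum_range fun k => ?_
    have := hCw (k + 1) (Nat.le_add_left 1 k)
    rw [Nat.add_sub_cancel] at this
    linarith [le_max_left (C (k + 1)) 0]
  exact ⟨hw, hw.tendsto_atTop_zero⟩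

/-- Lemma 6, part 3: additionally if C_k ≥ w_k − d w_{k−1} with d ∈ [0,1) and w nonnegative,
then ∑ w_k < ∞ (and hence w_k → 0). -/
theorem stmt_4 (a b C w : ℕ → ℝ) (A d : ℝ)
    (ha0 : ∀ k, 0 ≤ a k) (haA : ∀ k, a k ≤ A) (hA : A < 1)
    (hb0 : ∀ k, 0 ≤ b k) (hb : Summable b)
    (hC : ∀ k, C (k + 1) ≤ a k * C k + b k)
    (hd0 : 0 ≤ d) (hd1 : d < 1)
    (hw0 : ∀ k, 0 ≤ w k)
    (hCw : ∀ k ≥ 1, w k - d * w (k - 1) ≤ C k) :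
    Summable w ∧ Filter.Tendsto w Filter.atTop (nhds 0) :=
  stmt_4_general a b C w A d ha0 haA hA hb0 hb hC hd1 hw0 hCw
end

section
/- Let A be maximally monotone on H and let Φ : H → H be α-strongly monotone and L-Lipschitz with α, L > 0. For γ > 0 define the merit map G^γ(v) = (1/γ)[v − J_{γA}(v − γΦ(v))], where J_{γA} = (Id + γA)^{−1} is the resolvent, and let ū be the unique zero of A + Φ. Then for all v ∈ H, ‖v − ū‖ ≤ ((1 + γL)/α)‖G^γ(v)‖. -/
open RealInnerProductSpace

/-- A set-valued operator is monotone. -/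
def MonotoneOp {H : Type*} [NormedAddCommGroup H] [InnerProductSpace ℝ H]
    (A : H → Set H) : Prop :=
  ∀ ⦃x y a b : H⦄, a ∈ A x → b ∈ A y → 0 ≤ ⟪a - b, x - y⟫

/-- A set-valued operator is maximally monotone. -/
def MaxMonotoneOp {H : Type*} [NormedAddCommGroup H] [InnerProductSpace ℝ H]
    (A : H → Set H) : Prop :=
  MonotoneOp A ∧ ∀ B : H → Set H, MonotoneOp B → (∀ x, A x ⊆ B x) → ∀ x, B x = A x

/-! Write `g = Gγ v` and `d = v - ū`. The resolvent identity gives `g - Φ v ∈ A (v - γ g)`, and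
`-Φ ū ∈ A ū`, so monotonicity of `A` yields `0 ≤ ⟪g - (Φ v - Φ ū), d - γ g⟫`. Expanding and using
strong monotonicity and the Lipschitz bound of `Φ` gives
`α ‖d‖² + γ ‖g‖² ≤ (1 + γ L) ‖g‖ ‖d‖`, from which the bound follows. -/

section

variable {H : Type*} [NormedAddCommGroup H] [InnerProductSpace ℝ H]

theorem norm_le_of_inner_sub_smul_nonneg {α γ L : ℝ} (hα : 0 < α) (hγ : 0 < γ) {d g p : H}
    (hstrong : α * ‖d‖ ^ 2 ≤ ⟪p, d⟫) (hlip : ‖p‖ ≤ L * ‖d‖)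
    (hmono : 0 ≤ ⟪g - p, d - γ • g⟫) :
    ‖d‖ ≤ ((1 + γ * L) / α) * ‖g‖ := by
  have hexpand : ⟪g - p, d - γ • g⟫ = ⟪g, d⟫ - γ * ‖g‖ ^ 2 - ⟪p, d⟫ + γ * ⟪p, g⟫ := by
    simp only [inner_sub_left, inner_sub_right, inner_smul_right, real_inner_self_eq_norm_sq]
    ring
  have hgd : ⟪g, d⟫ ≤ ‖g‖ * ‖d‖ := real_inner_le_norm g d
  have hpg : ⟪p, g⟫ ≤ L * ‖d‖ * ‖g‖ :=
    (real_inner_le_norm p g).trans (mul_le_mul_of_nonneg_right hlip (norm_nonneg g))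
  have key : α * ‖d‖ ^ 2 + γ * ‖g‖ ^ 2 ≤ (1 + γ * L) * ‖g‖ * ‖d‖ := by
    nlinarith
  rcases (norm_nonneg d).eq_or_lt with hd | hd
  · have hg : ‖g‖ = 0 := by
      have : γ * ‖g‖ ^ 2 ≤ 0 := by simpa [← hd] using key
      exact pow_eq_zero_iff two_ne_zero |>.1 <|
        le_antisymm (nonpos_of_mul_nonpos_right this hγ) (sq_nonneg _)
    simp [← hd, hg]
  · rw [div_mul_eq_mul_div, le_div_iff₀ hα]
    nlinarith [norm_nonneg g]

theorem sub_mem_apply_sub_smul_of_resolvent {A : H → Set H} {γ : ℝ} (hγ : γ ≠ 0) {J : H → H}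
    (hJ : ∀ x, (1 / γ) • (x - J x) ∈ A (J x)) {v w g : H}
    (hg : g = (1 / γ) • (v - J (v - γ • w))) :
    g - w ∈ A (v - γ • g) := by
  have hJv : J (v - γ • w) = v - γ • g := by
    rw [hg, smul_smul, mul_one_div_cancel hγ, one_smul, sub_sub_cancel]
  have hres : (1 / γ) • (v - γ • w - J (v - γ • w)) = g - w := by
    rw [hJv, sub_sub_sub_cancel_left, ← smul_sub, smul_smul, one_div_mul_cancel hγ, one_smul]
  have h := hJ (v - γ • w)
  rwa [hres, hJv] at h

end

theorem stmt_9_general {H : Type*} [NormedAddCommGroup H] [InnerProductSpace ℝ H]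
    (A : H → Set H) (hA : MaxMonotoneOp A)
    (Φ : H → H) (α L : ℝ) (hα : 0 < α)
    (hΦstrong : ∀ v v', α * ‖v - v'‖ ^ 2 ≤ ⟪Φ v - Φ v', v - v'⟫)
    (hΦlip : ∀ v v', ‖Φ v - Φ v'‖ ≤ L * ‖v - v'‖)
    (γ : ℝ) (hγ : 0 < γ)
    (J : H → H) (hJ : ∀ x, (1 / γ) • (x - J x) ∈ A (J x))
    (ubar : H) (hubar : -Φ ubar ∈ A ubar)
    (Gγ : H → H) (hGγ : ∀ v, Gγ v = (1 / γ) • (v - J (v - γ • Φ v))) :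
    ∀ v : H, ‖v - ubar‖ ≤ ((1 + γ * L) / α) * ‖Gγ v‖ := by
  intro v
  have hmem := sub_mem_apply_sub_smul_of_resolvent hγ.ne' hJ (hGγ v)
  have hmono := hA.1 hmem hubar
  refine norm_le_of_inner_sub_smul_nonneg hα hγ (hΦstrong v ubar) (hΦlip v ubar) ?_
  convert hmono using 2 <;> abel

/-- Lemma 3 (merit function bound): if J is the resolvent of γA, Φ is α-strongly monotone and
L-Lipschitz, ū the unique zero of A + Φ, and Gγ(v) = (1/γ)(v − J(v − γΦ(v))), then
‖v − ū‖ ≤ ((1+γL)/α)‖Gγ(v)‖. -/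
theorem stmt_9 {H : Type*} [NormedAddCommGroup H] [InnerProductSpace ℝ H] [CompleteSpace H]
    (A : H → Set H) (hA : MaxMonotoneOp A)
    (Φ : H → H) (α L : ℝ) (hα : 0 < α) (hL : 0 < L)
    (hΦstrong : ∀ v v', α * ‖v - v'‖ ^ 2 ≤ ⟪Φ v - Φ v', v - v'⟫)
    (hΦlip : ∀ v v', ‖Φ v - Φ v'‖ ≤ L * ‖v - v'‖)
    (γ : ℝ) (hγ : 0 < γ)
    (J : H → H) (hJ : ∀ x, (1 / γ) • (x - J x) ∈ A (J x))
    (ubar : H) (hubar : -Φ ubar ∈ A ubar)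
    (Gγ : H → H) (hGγ : ∀ v, Gγ v = (1 / γ) • (v - J (v - γ • Φ v))) :
    ∀ v : H, ‖v - ubar‖ ≤ ((1 + γ * L) / α) * ‖Gγ v‖ :=
  stmt_9_general A hA Φ α L hα hΦstrong hΦlip γ hγ J hJ ubar hubar Gγ hGγ
end

section
/- Let T : H → H be a q-contraction with q ∈ (0,1) and fixed point ū. Consider the exact relaxed-inertial iteration z^k = v^k + τ_k(v^k − v^{k−1}), v^{k+1} = (1−θ_k)z^k + θ_k T(z^k), where θ_k ∈ [θ_min, θ_max] ⊂ (0,1), (τ_k) ⊂ [0, τ̄] with τ̄ < 1 monotonically increasing, and the parameter inequality Q_k τ_k(1+τ_k) + λ_k τ_k(1−τ_k) − Q_k λ_{k−1}(1−τ_{k−1}) ≤ 0 holds for all k, where Q_k = 1 − θ_k + 2θ_k q² and λ_k = (1−θ_k)/θ_k, and assume Q_k < 1 uniformly. Then v^k → ū strongly and ∑_k ‖v^k − ū‖² < ∞. -/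
/-!
With `Q_k = 1 - θ_k + 2 θ_k q²` and `λ_k = (1 - θ_k) / θ_k`, the energy
`Φ_k = ‖v^{k+1} - ū‖² - τ_{k+1} ‖v^k - ū‖² + λ_k (1 - τ_k) ‖v^{k+1} - v^k‖²`
satisfies `Φ_{k+1} ≤ Q_{k+1} Φ_k`: the relaxation step trades `‖v^{k+1} - z^k‖²` against the
contraction of `T`, the inertial step is expanded exactly, and the parameter inequality absorbs
the remaining `‖v^k - v^{k-1}‖²` terms. Hence the positive part of `Φ_k` decays geometrically,
and `‖v^{k+1} - ū‖² ≤ τ̄ ‖v^k - ū‖² + max Φ_k 0` with `τ̄ < 1` makes `∑ ‖v^k - ū‖²` finite.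
-/

open Filter Topology Finset

section InnerProduct

variable {H : Type*} [NormedAddCommGroup H] [InnerProductSpace ℝ H]

lemma norm_one_sub_smul_add_smul_sq (a b : H) (t : ℝ) :
    ‖(1 - t) • a + t • b‖ ^ 2 = (1 - t) * ‖a‖ ^ 2 + t * ‖b‖ ^ 2 - t * (1 - t) * ‖a - b‖ ^ 2 := by
  simp only [← real_inner_self_eq_norm_sq, inner_add_left, inner_add_right, inner_sub_left,
    inner_sub_right, real_inner_smul_left, real_inner_smul_right, real_inner_comm a b]
  ring

lemma norm_add_smul_sub_sq (x y : H) (t : ℝ) :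
    ‖x + t • (x - y)‖ ^ 2 = (1 + t) * ‖x‖ ^ 2 - t * ‖y‖ ^ 2 + t * (1 + t) * ‖x - y‖ ^ 2 := by
  have h := norm_one_sub_smul_add_smul_sq x y (-t)
  rw [show (1 - -t) • x + -t • y = x + t • (x - y) by module] at h
  linarith

lemma norm_sub_smul_sq (x y : H) (t : ℝ) :
    ‖x - t • y‖ ^ 2 = (1 - t) * ‖x‖ ^ 2 - t * (1 - t) * ‖y‖ ^ 2 + t * ‖x - y‖ ^ 2 := by
  have h := norm_one_sub_smul_add_smul_sq x (x - y) t
  rw [show (1 - t) • x + t • (x - y) = x - t • y by module, sub_sub_cancel] at h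
  linarith

lemma norm_relax_sub_sq_add_le {T : H → H} {q θ : ℝ} {u z y : H} (hθ : 0 < θ)
    (hTz : ‖T z - u‖ ≤ q * ‖z - u‖) (hy : y = (1 - θ) • z + θ • T z) :
    ‖y - u‖ ^ 2 + (1 - θ) / θ * ‖y - z‖ ^ 2 ≤ (1 - θ + θ * q ^ 2) * ‖z - u‖ ^ 2 := by
  have hyu : ‖y - u‖ ^ 2 = (1 - θ) * ‖z - u‖ ^ 2 + θ * ‖T z - u‖ ^ 2
      - θ * (1 - θ) * ‖z - T z‖ ^ 2 := by
    rw [show y - u = (1 - θ) • (z - u) + θ • (T z - u) by rw [hy]; module,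
      norm_one_sub_smul_add_smul_sq, sub_sub_sub_cancel_right]
  have hyz : (1 - θ) / θ * ‖y - z‖ ^ 2 = θ * (1 - θ) * ‖z - T z‖ ^ 2 := by
    rw [show y - z = θ • (T z - z) by rw [hy]; module, norm_smul, Real.norm_of_nonneg hθ.le,
      norm_sub_rev]
    field_simp
  have hTz_sq : ‖T z - u‖ ^ 2 ≤ q ^ 2 * ‖z - u‖ ^ 2 := by
    rw [← mul_pow]; exact pow_le_pow_left₀ (norm_nonneg _) hTz 2
  nlinarith

lemma relaxedInertial_energy_step {T : H → H} {q θ τ τ' τnext lam lam' Q : ℝ} {u x' x z y : H}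
    (hθ0 : 0 < θ) (hθ1 : θ ≤ 1) (hτ : 0 ≤ τ) (hlam : lam = (1 - θ) / θ)
    (hQ : 1 - θ + θ * q ^ 2 ≤ Q) (hτnext : Q * τ ≤ τnext)
    (hparam : Q * τ * (1 + τ) + lam * τ * (1 - τ) - Q * lam' * (1 - τ') ≤ 0)
    (hTz : ‖T z - u‖ ≤ q * ‖z - u‖) (hz : z = x + τ • (x - x'))
    (hy : y = (1 - θ) • z + θ • T z) :
    ‖y - u‖ ^ 2 - τnext * ‖x - u‖ ^ 2 + lam * (1 - τ) * ‖y - x‖ ^ 2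
      ≤ Q * (‖x - u‖ ^ 2 - τ * ‖x' - u‖ ^ 2 + lam' * (1 - τ') * ‖x - x'‖ ^ 2) := by
  have hlam0 : 0 ≤ lam := hlam ▸ div_nonneg (by linarith) hθ0.le
  have hzu : ‖z - u‖ ^ 2 = (1 + τ) * ‖x - u‖ ^ 2 - τ * ‖x' - u‖ ^ 2
      + τ * (1 + τ) * ‖x - x'‖ ^ 2 := by
    rw [show z - u = (x - u) + τ • ((x - u) - (x' - u)) by rw [hz]; module,
      norm_add_smul_sub_sq, sub_sub_sub_cancel_right]
  have hrelax : ‖y - u‖ ^ 2 + lam * ‖y - z‖ ^ 2 ≤ Q * ((1 + τ) * ‖x - u‖ ^ 2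
      - τ * ‖x' - u‖ ^ 2 + τ * (1 + τ) * ‖x - x'‖ ^ 2) := by
    rw [hlam, ← hzu]
    exact (norm_relax_sub_sq_add_le hθ0 hTz hy).trans
      (mul_le_mul_of_nonneg_right hQ (sq_nonneg _))
  have hyz : (1 - τ) * ‖y - x‖ ^ 2 - τ * (1 - τ) * ‖x - x'‖ ^ 2 ≤ ‖y - z‖ ^ 2 := by
    rw [show y - z = (y - x) - τ • (x - x') by rw [hz]; module, norm_sub_smul_sq]
    nlinarith [mul_nonneg hτ (sq_nonneg ‖y - x - (x - x')‖)]
  linarith [mul_le_mul_of_nonneg_left hyz hlam0,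
    mul_le_mul_of_nonneg_right hτnext (sq_nonneg ‖x - u‖),
    mul_nonpos_of_nonpos_of_nonneg hparam (sq_nonneg ‖x - x'‖)]

end InnerProduct

lemma tendsto_of_summable_norm_sub_sq {E : Type*} [SeminormedAddCommGroup E] {v : ℕ → E} {u : E}
    (h : Summable fun k => ‖v k - u‖ ^ 2) : Tendsto v atTop (𝓝 u) := by
  rw [tendsto_iff_norm_sub_tendsto_zero]
  simpa [Real.sqrt_sq (norm_nonneg _)] using h.tendsto_atTop_zero.sqrt

lemma summable_max_zero_of_le_mul {Φ c : ℕ → ℝ} {r : ℝ} (hr : r < 1) (hc0 : ∀ m, 0 ≤ c m)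
    (hcr : ∀ m, c m ≤ r) (hΦ : ∀ m, Φ (m + 1) ≤ c m * Φ m) :
    Summable fun m => max (Φ m) 0 := by
  have hr0 : 0 ≤ r := (hc0 0).trans (hcr 0)
  have hdecay : ∀ m, max (Φ m) 0 ≤ max (Φ 0) 0 * r ^ m := by
    intro m
    induction m with
    | zero => simp
    | succ m ih =>
      have hstep : max (Φ (m + 1)) 0 ≤ r * max (Φ m) 0 := by
        refine max_le ?_ (mul_nonneg hr0 (le_max_right _ _))
        calc Φ (m + 1) ≤ c m * Φ m := hΦ m
          _ ≤ c m * max (Φ m) 0 := mul_le_mul_of_nonneg_left (le_max_left _ _) (hc0 m)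
          _ ≤ r * max (Φ m) 0 := mul_le_mul_of_nonneg_right (hcr m) (le_max_right _ _)
      calc max (Φ (m + 1)) 0 ≤ r * max (Φ m) 0 := hstep
        _ ≤ r * (max (Φ 0) 0 * r ^ m) := mul_le_mul_of_nonneg_left ih hr0
        _ = max (Φ 0) 0 * r ^ (m + 1) := by ring
  exact .of_nonneg_of_le (fun m => le_max_right _ _) hdecay
    ((summable_geometric_of_lt_one hr0 hr).mul_left _)

lemma summable_of_succ_le_mul_add_s12 {a b : ℕ → ℝ} {s : ℝ} (hs : s < 1) (ha : ∀ m, 0 ≤ a m)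
    (hb : ∀ m, 0 ≤ b m) (hbs : Summable b) (hab : ∀ m, a (m + 1) ≤ s * a m + b m) :
    Summable a := by
  refine summable_of_sum_range_le ha (c := (a 0 + ∑' m, b m) / (1 - s)) fun n => ?_
  rw [le_div_iff₀ (by linarith)]
  have hsucc : ∑ i ∈ range (n + 1), a i ≤ a 0 + s * ∑ i ∈ range n, a i + ∑' m, b m :=
    calc ∑ i ∈ range (n + 1), a i = a 0 + ∑ i ∈ range n, a (i + 1) := by
          rw [sum_range_succ', add_comm]
      _ ≤ a 0 + ∑ i ∈ range n, (s * a i + b i) := by gcongr with i; exact hab i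
      _ ≤ a 0 + s * ∑ i ∈ range n, a i + ∑' m, b m := by
          rw [sum_add_distrib, ← mul_sum, ← add_assoc]
          gcongr
          exact hbs.sum_le_tsum _ fun i _ => hb i
  have hmono : ∑ i ∈ range n, a i ≤ ∑ i ∈ range (n + 1), a i := by
    rw [sum_range_succ]; linarith [ha n]
  linarith

theorem stmt_12_general {H : Type*} [NormedAddCommGroup H] [InnerProductSpace ℝ H]
    (T : H → H) (q : ℝ)
    (hT : ∀ x y, ‖T x - T y‖ ≤ q * ‖x - y‖)
    (ubar : H) (hfix : T ubar = ubar)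
    (θ τ : ℕ → ℝ) (θmin θmax τbar Qbar : ℝ)
    (hθmin : 0 < θmin) (hθmax : θmax < 1)
    (hθ : ∀ k, θ k ∈ Set.Icc θmin θmax)
    (hτ0 : ∀ k, 0 ≤ τ k) (hτub : ∀ k, τ k ≤ τbar) (hτbar : τbar < 1)
    (hτmono : Monotone τ)
    (Q lam : ℕ → ℝ)
    (hQ : ∀ k, Q k = 1 - θ k + 2 * θ k * q ^ 2)
    (hlam : ∀ k, lam k = (1 - θ k) / θ k)
    (hparam : ∀ k ≥ 1,
      Q k * τ k * (1 + τ k) + lam k * τ k * (1 - τ k)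
        - Q k * lam (k - 1) * (1 - τ (k - 1)) ≤ 0)
    (hQbar : Qbar < 1) (hQb : ∀ k, Q k ≤ Qbar)
    (v z : ℕ → H)
    (hz : ∀ k ≥ 1, z k = v k + τ k • (v k - v (k - 1)))
    (hv : ∀ k ≥ 1, v (k + 1) = (1 - θ k) • z k + θ k • T (z k)) :
    Filter.Tendsto v Filter.atTop (nhds ubar) ∧
      Summable (fun k => ‖v k - ubar‖ ^ 2) := by
  have hθ0 (k : ℕ) : 0 < θ k := hθmin.trans_le (hθ k).1
  have hθ1 (k : ℕ) : θ k ≤ 1 := ((hθ k).2.trans_lt hθmax).le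
  have hQ0 (k : ℕ) : 0 ≤ Q k := by rw [hQ k]; nlinarith [hθ0 k, hθ1 k, sq_nonneg q]
  set Φ : ℕ → ℝ := fun m => ‖v (m + 1) - ubar‖ ^ 2 - τ (m + 1) * ‖v m - ubar‖ ^ 2
    + lam m * (1 - τ m) * ‖v (m + 1) - v m‖ ^ 2
  have hΦ_succ (m : ℕ) : Φ (m + 1) ≤ Q (m + 1) * Φ m := by
    have hQτ : Q (m + 1) * τ (m + 1) ≤ τ (m + 2) :=
      (mul_le_of_le_one_left (hτ0 _) ((hQb _).trans hQbar.le)).trans (hτmono (by omega))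
    have hparam_m := hparam (m + 1) (by omega)
    have hz_m := hz (m + 1) (by omega)
    simp only [Nat.add_sub_cancel] at hparam_m hz_m
    exact relaxedInertial_energy_step (hθ0 _) (hθ1 _) (hτ0 _) (hlam _)
      (by rw [hQ]; nlinarith [mul_nonneg (hθ0 (m + 1)).le (sq_nonneg q)]) hQτ hparam_m
      (by simpa [hfix] using hT (z (m + 1)) ubar) hz_m (hv (m + 1) (by omega))
  have hΦ_summable : Summable fun m => max (Φ m) 0 :=
    summable_max_zero_of_le_mul hQbar (fun m => hQ0 (m + 1)) (fun m => hQb (m + 1)) hΦ_succ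
  have hdist_succ (m : ℕ) :
      ‖v (m + 1) - ubar‖ ^ 2 ≤ τbar * ‖v m - ubar‖ ^ 2 + max (Φ m) 0 := by
    have hlam0 : 0 ≤ lam m := by
      rw [hlam]; exact div_nonneg (by linarith [hθ1 m]) (hθ0 m).le
    linarith [le_max_left (Φ m) 0,
      mul_le_mul_of_nonneg_right (hτub (m + 1)) (sq_nonneg ‖v m - ubar‖),
      mul_nonneg (mul_nonneg hlam0 (sub_nonneg.2 ((hτub m).trans hτbar.le)))
        (sq_nonneg ‖v (m + 1) - v m‖)]
  have hsum : Summable fun k => ‖v k - ubar‖ ^ 2 :=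
    summable_of_succ_le_mul_add_s12 hτbar (fun _ => sq_nonneg _) (fun _ => le_max_right _ _)
      hΦ_summable hdist_succ
  exact ⟨tendsto_of_summable_norm_sub_sq hsum, hsum⟩

/-- Theorem 1 (exact case): the relaxed-inertial fixed point iteration for a q-contraction T
converges strongly to the fixed point ū, with ∑ ‖v^k − ū‖² < ∞. -/
theorem stmt_12 {H : Type*} [NormedAddCommGroup H] [InnerProductSpace ℝ H] [CompleteSpace H]
    (T : H → H) (q : ℝ) (hq0 : 0 < q) (hq1 : q < 1)
    (hT : ∀ x y, ‖T x - T y‖ ≤ q * ‖x - y‖)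
    (ubar : H) (hfix : T ubar = ubar)
    (θ τ : ℕ → ℝ) (θmin θmax τbar Qbar : ℝ)
    (hθmin : 0 < θmin) (hθmax : θmax < 1)
    (hθ : ∀ k, θ k ∈ Set.Icc θmin θmax)
    (hτ0 : ∀ k, 0 ≤ τ k) (hτub : ∀ k, τ k ≤ τbar) (hτbar : τbar < 1)
    (hτmono : Monotone τ)
    (Q lam : ℕ → ℝ)
    (hQ : ∀ k, Q k = 1 - θ k + 2 * θ k * q ^ 2)
    (hlam : ∀ k, lam k = (1 - θ k) / θ k)
    (hparam : ∀ k ≥ 1,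
      Q k * τ k * (1 + τ k) + lam k * τ k * (1 - τ k)
        - Q k * lam (k - 1) * (1 - τ (k - 1)) ≤ 0)
    (hQbar : Qbar < 1) (hQb : ∀ k, Q k ≤ Qbar)
    (v z : ℕ → H)
    (hinit : v 0 = v 1)
    (hz : ∀ k ≥ 1, z k = v k + τ k • (v k - v (k - 1)))
    (hv : ∀ k ≥ 1, v (k + 1) = (1 - θ k) • z k + θ k • T (z k)) :
    Filter.Tendsto v Filter.atTop (nhds ubar) ∧
      Summable (fun k => ‖v k - ubar‖ ^ 2) :=
  stmt_12_general T q hT ubar hfix θ τ θmin θmax τbar Qbar hθmin hθmax hθ hτ0 hτub hτbar hτmono Q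
    lam hQ hlam hparam hQbar hQb v z hz hv
end

section
/- Let T : H → H be a q-contraction with fixed point ū, (δ_k) a perturbation sequence and (θ_k) ⊂ [θ_min, θ_max] ⊂ (0,1) with ∑_k θ_k‖δ_k‖² < ∞. With iterates z^k = v^k + τ_k(v^k − v^{k−1}), v^{k+1} = (1−θ_k)z^k + θ_k(T(z^k) + δ_k), (τ_k) monotonically increasing in [0, τ̄], τ̄ < 1, and with Q_k = 1−θ_k+2θ_k q², λ_k = (1−θ_k)/θ_k satisfying Q_k τ_k(1+τ_k) + λ_k τ_k(1−τ_k) − Q_k λ_{k−1}(1−τ_{k−1}) ≤ 0 and Q_k ≤ Q̄ < 1, the energy V_k = ‖v^k − ū‖² − τ_{k−1}‖v^{k−1} − ū‖² + λ_{k−1}(1−τ_{k−1})‖v^k − v^{k−1}‖² satisfies V_{k+1} ≤ Q_k V_k + 2θ_k‖δ_k‖² for all k ≥ 1. -/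
/-!
Write the relaxed step as `v⁺ - ū = (1 - θ)(z - ū) + θ(T z + δ - ū)`. The identity
`‖(1 - t)a + t b‖² = (1 - t)‖a‖² + t‖b‖² - t(1 - t)‖a - b‖²` together with
`‖T z + δ - ū‖² ≤ 2q²‖z - ū‖² + 2‖δ‖²` gives
`‖v⁺ - ū‖² ≤ Q‖z - ū‖² + 2θ‖δ‖² - λ‖v⁺ - z‖²`. The same identity expands `‖z - ū‖²` along the
inertial extrapolation and bounds `‖v⁺ - z‖²` from below by increments of the iterates.
Collecting terms, `V⁺ - Q V - 2θ‖δ‖²` is a combination of `‖v - ū‖²`, `‖v⁻ - ū‖²` and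
`‖v - v⁻‖²` whose coefficients are nonpositive because `Q ≤ 1`, `τ` is increasing and the
parameter condition holds.
-/

section InertialRelaxation

variable {H : Type*} [NormedAddCommGroup H] [InnerProductSpace ℝ H]

theorem norm_sub_smul_add_smul_sq (t : ℝ) (a b : H) :
    ‖(1 - t) • a + t • b‖ ^ 2 = (1 - t) * ‖a‖ ^ 2 + t * ‖b‖ ^ 2 - t * (1 - t) * ‖a - b‖ ^ 2 := by
  simp only [← real_inner_self_eq_norm_sq, inner_add_add_self, inner_sub_sub_self,
    real_inner_smul_left, real_inner_smul_right, real_inner_comm b a]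
  ring

theorem norm_extrapolate_sub_sq (τ : ℝ) (u v w : H) :
    ‖v + τ • (v - w) - u‖ ^ 2 =
      (1 + τ) * ‖v - u‖ ^ 2 - τ * ‖w - u‖ ^ 2 + τ * (1 + τ) * ‖v - w‖ ^ 2 := by
  have h : v + τ • (v - w) - u = (1 - -τ) • (v - u) + (-τ) • (w - u) := by module
  rw [h, norm_sub_smul_add_smul_sq, sub_sub_sub_cancel_right]
  ring

theorem sub_norm_sq_le_norm_sub_extrapolate_sq {τ : ℝ} (hτ : 0 ≤ τ) (x v w : H) :
    (1 - τ) * ‖x - v‖ ^ 2 - τ * (1 - τ) * ‖v - w‖ ^ 2 ≤ ‖x - (v + τ • (v - w))‖ ^ 2 := by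
  have h : x - (v + τ • (v - w)) = (1 - τ) • (x - v) + τ • ((x - v) - (v - w)) := by module
  rw [h, norm_sub_smul_add_smul_sq, sub_sub_cancel]
  nlinarith [sq_nonneg ‖(x - v) - (v - w)‖]

theorem norm_relaxed_step_sub_sq_le {T : H → H} {q θ : ℝ} {u z δ : H}
    (hT : ‖T z - u‖ ≤ q * ‖z - u‖) (hθ : 0 < θ) :
    ‖(1 - θ) • z + θ • (T z + δ) - u‖ ^ 2 ≤
      (1 - θ + 2 * θ * q ^ 2) * ‖z - u‖ ^ 2 + 2 * θ * ‖δ‖ ^ 2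
        - (1 - θ) / θ * ‖(1 - θ) • z + θ • (T z + δ) - z‖ ^ 2 := by
  set a := z - u
  set b := T z + δ - u
  have hstep : (1 - θ) • z + θ • (T z + δ) - u = (1 - θ) • a + θ • b := by module
  have hincr : (1 - θ) • z + θ • (T z + δ) - z = -θ • (a - b) := by module
  have hb : ‖b‖ ≤ q * ‖a‖ + ‖δ‖ :=
    calc ‖b‖ = ‖(T z - u) + δ‖ := congrArg norm (add_sub_right_comm _ _ _)
      _ ≤ q * ‖a‖ + ‖δ‖ := (norm_add_le _ _).trans (by gcongr)
  -- `(x + y)² ≤ 2x² + 2y²`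
  have hb_sq : ‖b‖ ^ 2 ≤ 2 * q ^ 2 * ‖a‖ ^ 2 + 2 * ‖δ‖ ^ 2 := by
    nlinarith [norm_nonneg b, sq_nonneg (q * ‖a‖ - ‖δ‖)]
  have hlam : (1 - θ) / θ * ‖-θ • (a - b)‖ ^ 2 = θ * (1 - θ) * ‖a - b‖ ^ 2 := by
    rw [norm_smul, mul_pow, Real.norm_eq_abs, sq_abs]
    field_simp
  rw [hstep, hincr, hlam, norm_sub_smul_add_smul_sq]
  linarith [mul_le_mul_of_nonneg_left hb_sq hθ.le]

def inertialEnergy (u : H) (τ lam : ℝ) (w v : H) : ℝ :=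
  ‖v - u‖ ^ 2 - τ * ‖w - u‖ ^ 2 + lam * (1 - τ) * ‖v - w‖ ^ 2

theorem inertialEnergy_step_le {T : H → H} {q θ τ₀ τ₁ lam₀ : ℝ} {u v₀ v₁ v₂ z δ : H}
    (hT : ‖T z - u‖ ≤ q * ‖z - u‖) (hθ₀ : 0 < θ) (hθ₁ : θ ≤ 1)
    (hτ₀ : 0 ≤ τ₀) (hτ : τ₀ ≤ τ₁) (hQ : 1 - θ + 2 * θ * q ^ 2 ≤ 1)
    (hparam : (1 - θ + 2 * θ * q ^ 2) * τ₁ * (1 + τ₁) + (1 - θ) / θ * τ₁ * (1 - τ₁)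
        - (1 - θ + 2 * θ * q ^ 2) * lam₀ * (1 - τ₀) ≤ 0)
    (hz : z = v₁ + τ₁ • (v₁ - v₀)) (hv : v₂ = (1 - θ) • z + θ • (T z + δ)) :
    inertialEnergy u τ₁ ((1 - θ) / θ) v₁ v₂ ≤
      (1 - θ + 2 * θ * q ^ 2) * inertialEnergy u τ₀ lam₀ v₀ v₁ + 2 * θ * ‖δ‖ ^ 2 := by
  have hstep := norm_relaxed_step_sub_sq_le (δ := δ) hT hθ₀
  rw [← hv, hz, norm_extrapolate_sub_sq] at hstep
  have hincr := sub_norm_sq_le_norm_sub_extrapolate_sq (hτ₀.trans hτ) v₂ v₁ v₀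
  set Q := 1 - θ + 2 * θ * q ^ 2
  set lam₁ := (1 - θ) / θ
  have hQ₀ : 0 ≤ Q := by nlinarith [sq_nonneg q]
  have hlam₁ : 0 ≤ lam₁ := div_nonneg (by linarith) hθ₀.le
  have hcurr : (Q - 1) * τ₁ * ‖v₁ - u‖ ^ 2 ≤ 0 :=
    mul_nonpos_of_nonpos_of_nonneg (by nlinarith) (sq_nonneg _)
  have hprev : Q * (τ₀ - τ₁) * ‖v₀ - u‖ ^ 2 ≤ 0 :=
    mul_nonpos_of_nonpos_of_nonneg (by nlinarith) (sq_nonneg _)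
  have hdiff := mul_nonpos_of_nonpos_of_nonneg hparam (sq_nonneg ‖v₁ - v₀‖)
  have hincr_lam := mul_le_mul_of_nonneg_left hincr hlam₁
  unfold inertialEnergy
  linarith

end InertialRelaxation

theorem stmt_13_general {H : Type*} [NormedAddCommGroup H] [InnerProductSpace ℝ H]
    (T : H → H) (q : ℝ)
    (hT : ∀ x y, ‖T x - T y‖ ≤ q * ‖x - y‖)
    (ubar : H) (hfix : T ubar = ubar)
    (δ : ℕ → H)
    (θ τ : ℕ → ℝ) (θmin θmax Qbar : ℝ)
    (hθmin : 0 < θmin) (hθmax : θmax < 1)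
    (hθ : ∀ k, θ k ∈ Set.Icc θmin θmax)
    (hτ0 : ∀ k, 0 ≤ τ k)
    (hτmono : Monotone τ)
    (Q lam : ℕ → ℝ)
    (hQ : ∀ k, Q k = 1 - θ k + 2 * θ k * q ^ 2)
    (hlam : ∀ k, lam k = (1 - θ k) / θ k)
    (hparam : ∀ k ≥ 1,
      Q k * τ k * (1 + τ k) + lam k * τ k * (1 - τ k)
        - Q k * lam (k - 1) * (1 - τ (k - 1)) ≤ 0)
    (hQbar : Qbar < 1) (hQb : ∀ k, Q k ≤ Qbar)
    (v z : ℕ → H)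
    (hz : ∀ k ≥ 1, z k = v k + τ k • (v k - v (k - 1)))
    (hv : ∀ k ≥ 1, v (k + 1) = (1 - θ k) • z k + θ k • (T (z k) + δ k))
    (V : ℕ → ℝ)
    (hV : ∀ k, V k = ‖v k - ubar‖ ^ 2 - τ (k - 1) * ‖v (k - 1) - ubar‖ ^ 2
        + lam (k - 1) * (1 - τ (k - 1)) * ‖v k - v (k - 1)‖ ^ 2) :
    ∀ k ≥ 1, V (k + 1) ≤ Q k * V k + 2 * θ k * ‖δ k‖ ^ 2 := by
  intro k hk
  obtain ⟨hθl, hθu⟩ := hθ k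
  have hVk : V k = inertialEnergy ubar (τ (k - 1)) (lam (k - 1)) (v (k - 1)) (v k) := hV k
  have hVk1 : V (k + 1) = inertialEnergy ubar (τ k) (lam k) (v k) (v (k + 1)) := hV (k + 1)
  have hQk : Q k ≤ 1 := (hQb k).trans hQbar.le
  have hp := hparam k hk
  rw [hQ k] at hQk hp ⊢
  rw [hlam k] at hp
  rw [hVk, hVk1, hlam k]
  exact inertialEnergy_step_le (by simpa [hfix] using hT (z k) ubar) (hθmin.trans_le hθl)
    (by linarith) (hτ0 _) (hτmono (Nat.sub_le k 1)) hQk hp (hz k hk) (hv k hk)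

/-- Key energy estimate in Theorem 1 (inexact case): with
V_k = ‖v^k − ū‖² − τ_{k−1}‖v^{k−1} − ū‖² + λ_{k−1}(1−τ_{k−1})‖v^k − v^{k−1}‖²,
one has V_{k+1} ≤ Q_k V_k + 2θ_k‖δ_k‖² for all k ≥ 1. -/
theorem stmt_13 {H : Type*} [NormedAddCommGroup H] [InnerProductSpace ℝ H] [CompleteSpace H]
    (T : H → H) (q : ℝ) (hq0 : 0 < q) (hq1 : q < 1)
    (hT : ∀ x y, ‖T x - T y‖ ≤ q * ‖x - y‖)
    (ubar : H) (hfix : T ubar = ubar)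
    (δ : ℕ → H)
    (θ τ : ℕ → ℝ) (θmin θmax τbar Qbar : ℝ)
    (hθmin : 0 < θmin) (hθmax : θmax < 1)
    (hθ : ∀ k, θ k ∈ Set.Icc θmin θmax)
    (hδ : Summable (fun k => θ k * ‖δ k‖ ^ 2))
    (hτ0 : ∀ k, 0 ≤ τ k) (hτub : ∀ k, τ k ≤ τbar) (hτbar : τbar < 1)
    (hτmono : Monotone τ)
    (Q lam : ℕ → ℝ)
    (hQ : ∀ k, Q k = 1 - θ k + 2 * θ k * q ^ 2)
    (hlam : ∀ k, lam k = (1 - θ k) / θ k)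
    (hparam : ∀ k ≥ 1,
      Q k * τ k * (1 + τ k) + lam k * τ k * (1 - τ k)
        - Q k * lam (k - 1) * (1 - τ (k - 1)) ≤ 0)
    (hQbar : Qbar < 1) (hQb : ∀ k, Q k ≤ Qbar)
    (v z : ℕ → H)
    (hz : ∀ k ≥ 1, z k = v k + τ k • (v k - v (k - 1)))
    (hv : ∀ k ≥ 1, v (k + 1) = (1 - θ k) • z k + θ k • (T (z k) + δ k))
    (V : ℕ → ℝ)
    (hV : ∀ k, V k = ‖v k - ubar‖ ^ 2 - τ (k - 1) * ‖v (k - 1) - ubar‖ ^ 2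
        + lam (k - 1) * (1 - τ (k - 1)) * ‖v k - v (k - 1)‖ ^ 2) :
    ∀ k ≥ 1, V (k + 1) ≤ Q k * V k + 2 * θ k * ‖δ k‖ ^ 2 :=
  stmt_13_general T q hT ubar hfix δ θ τ θmin θmax Qbar hθmin hθmax hθ hτ0 hτmono Q lam hQ hlam
    hparam hQbar hQb v z hz hv V hV
end
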